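/- Let w and w' be even closed walks in a signed graph whose first vertex terms coincide. Then, choosing the associated binomials appropriately (each is only defined up to sign), the binomial of the concatenation satisfies B⁺_{w+w'} = B⁺_w · B⁺_{w'} and B⁻_{w+w'} = B⁻_w · B⁻_{w'}. -/

import Mathlib

variable {V : Type*}

/-- The product of τ(e,u)·τ(e,v) over all edge terms e = uv of a walk in a signed
graph (G,τ), where the sign τ assigns a unit ±1 to each incidence. -/
def walkSign (G : SimpleGraph V) (τ : Sym2 V → V → ℤˣ) :
    {u v : V} → G.Walk u v → ℤˣ
  | _, _, SimpleGraph.Walk.nil => 1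
  | _, _, @SimpleGraph.Walk.cons _ _ a b _ _ p =>
      τ s(a, b) a * τ s(a, b) b * walkSign G τ p

/-- μ of a closed walk: (-1)^(number of unbalanced vertex terms). -/
def mu (G : SimpleGraph V) (τ : Sym2 V → V → ℤˣ) {u v : V} (w : G.Walk u v) : ℤˣ :=
  (-1) ^ w.length * walkSign G τ w

/-- The i-th dart (oriented edge term) of a walk. -/
def dartAt {G : SimpleGraph V} {u v : V} (w : G.Walk u v) (i : Fin w.length) :
    G.Dart :=
  w.darts.get (Fin.cast w.length_darts.symm i)

/-- Cyclic successor on `Fin n`. -/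
def csucc {n : ℕ} (i : Fin n) : Fin n := ⟨(i + 1) % n, Nat.mod_lt _ i.pos⟩

/-- `FlipRel G τ w κ`: κ assigns a sign ±1 to each edge term of the closed walk w,
flipping exactly at the unbalanced vertex terms (cyclically).  Such a κ records (up
to a global sign) the parity of the balanced section containing each edge term in the
balanced section-decomposition of w, and a κ satisfying this relation exists iff w is
even. -/
def FlipRel (G : SimpleGraph V) (τ : Sym2 V → V → ℤˣ) {v : V} (w : G.Walk v v)
    (κ : Fin w.length → ℤˣ) : Prop :=
  ∀ i : Fin w.length,
    κ (csucc i) =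
      -(τ (dartAt w i).edge (dartAt w i).toProd.2 *
          τ (dartAt w (csucc i)).edge (dartAt w i).toProd.2) * κ i

open MvPolynomial in
/-- The positive monomial B_w⁺ of the binomial associated with an even closed walk w,
relative to the section-parity assignment κ: the product of all edge terms lying in
the sections with κ = 1. -/
noncomputable def Bpos (K : Type*) [Field K] {G : SimpleGraph V} {v : V}
    (w : G.Walk v v) (κ : Fin w.length → ℤˣ) : MvPolynomial G.edgeSet K :=
  ∏ i ∈ Finset.univ.filter (fun i => κ i = 1),
    X (⟨(dartAt w i).edge, (dartAt w i).edge_mem⟩ : G.edgeSet)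

open MvPolynomial in
/-- The negative monomial B_w⁻: the product of all edge terms in sections with κ = -1. -/
noncomputable def Bneg (K : Type*) [Field K] {G : SimpleGraph V} {v : V}
    (w : G.Walk v v) (κ : Fin w.length → ℤˣ) : MvPolynomial G.edgeSet K :=
  ∏ i ∈ Finset.univ.filter (fun i => κ i = -1),
    X (⟨(dartAt w i).edge, (dartAt w i).edge_mem⟩ : G.edgeSet)

open MvPolynomial in
/-- The toric ideal I_{(G,τ)} of a signed graph: the ideal of K[e : e ∈ E(G)]
generated by the binomials e^{b⁺} - e^{b⁻} over integer vectors b in the kernel of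
the incidence matrix A(G,τ). -/
noncomputable def toricIdeal (K : Type*) [Field K] [DecidableEq V]
    (G : SimpleGraph V) [Fintype G.edgeSet] (τ : Sym2 V → V → ℤˣ) :
    Ideal (MvPolynomial G.edgeSet K) :=
  Ideal.span { f | ∃ b : G.edgeSet → ℤ,
    (∀ v : V, ∑ e : G.edgeSet,
      (if v ∈ (e : Sym2 V) then (τ e v : ℤ) else 0) * b e = 0) ∧
    f = (∏ e : G.edgeSet, X e ^ (b e).toNat)
      - ∏ e : G.edgeSet, X e ^ (-(b e)).toNat }

/-! Choose κ canonically: κᵢ = τ(eᵢ, start of eᵢ) · μ(e₀ ⋯ eᵢ₋₁), where μ of a prefix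
is the product of −τ(e,·)τ(e,·) over its edge terms. With this choice the flip relation
at i is the recursion μ(e₀ ⋯ eᵢ) = μ(e₀ ⋯ eᵢ₋₁) · (−τ τ), except at the wrap-around,
where it says μ(w) = 1. As μ(w) = 1, the canonical κ of w + w' restricts to the canonical
κ of w on the first |w| edge terms and to that of w' on the others, so both monomials of
the binomial factor. -/

open SimpleGraph

namespace SimpleGraph.Walk

variable {G : SimpleGraph V}

lemma dartAt_eq_getElem {u v : V} (w : G.Walk u v) (i : Fin w.length) :
    dartAt w i = w.darts[(i : ℕ)]'(by simp) := rfl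

lemma dartAt_fst {u v : V} (w : G.Walk u v) (i : Fin w.length) :
    (dartAt w i).fst = w.getVert i := by
  simp [dartAt_eq_getElem, darts_getElem_eq_getVert]

lemma dartAt_snd {u v : V} (w : G.Walk u v) (i : Fin w.length) :
    (dartAt w i).snd = w.getVert (i + 1) := by
  simp [dartAt_eq_getElem, darts_getElem_eq_getVert]

lemma dartAt_csucc_fst {v : V} (w : G.Walk v v) (i : Fin w.length) :
    (dartAt w (csucc i)).fst = (dartAt w i).snd := by
  rw [dartAt_fst, dartAt_snd, csucc]
  rcases (show (i : ℕ) + 1 ≤ w.length from i.isLt).eq_or_lt with h | h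
  · simp [h]
  · simp [Nat.mod_eq_of_lt h]

lemma dartAt_append_left {u v x : V} (p : G.Walk u v) (q : G.Walk v x) (i : Fin p.length) :
    dartAt (p.append q) ⟨i, by simp; omega⟩ = dartAt p i := by
  simp [dartAt_eq_getElem, darts_append, List.getElem_append_left]

lemma dartAt_append_right {u v x : V} (p : G.Walk u v) (q : G.Walk v x) (j : Fin q.length) :
    dartAt (p.append q) ⟨p.length + j, by simp⟩ = dartAt q j := by
  simp [dartAt_eq_getElem, darts_append, List.getElem_append_right]

lemma prod_fin_length_append {M : Type*} [CommMonoid M] {u v x : V} (p : G.Walk u v)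
    (q : G.Walk v x) (f : Fin (p.append q).length → M) :
    ∏ i, f i = (∏ i : Fin p.length, f ⟨i, by simp; omega⟩) *
      ∏ j : Fin q.length, f ⟨p.length + j, by simp⟩ := by
  rw [← Fin.prod_congr' f (length_append p q).symm, Fin.prod_univ_add]
  rfl

end SimpleGraph.Walk

section SectionParity

variable {G : SimpleGraph V} (τ : Sym2 V → V → ℤˣ)

def dartMu (d : G.Dart) : ℤˣ := -(τ d.edge d.fst * τ d.edge d.snd)

lemma mu_eq_prod_dartMu {u v : V} (w : G.Walk u v) :
    mu G τ w = (w.darts.map (dartMu τ)).prod := by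
  induction w with
  | nil => rfl
  | cons h p ih =>
    rw [mu] at ih ⊢
    simp only [Walk.length_cons, walkSign, pow_succ, Walk.darts_cons, List.map_cons,
      List.prod_cons, ← ih, dartMu, Dart.edge_mk]
    simp only [neg_mul, mul_neg, mul_one]
    ac_rfl

lemma mu_append {u v x : V} (p : G.Walk u v) (q : G.Walk v x) :
    mu G τ (p.append q) = mu G τ p * mu G τ q := by
  simp only [mu_eq_prod_dartMu, Walk.darts_append, List.map_append, List.prod_append]

def prefixMu {u v : V} (w : G.Walk u v) (k : ℕ) : ℤˣ :=
  ((w.darts.map (dartMu τ)).take k).prod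

lemma prefixMu_succ {u v : V} (w : G.Walk u v) (i : Fin w.length) :
    prefixMu τ w (i + 1) = prefixMu τ w i * dartMu τ (dartAt w i) := by
  rw [prefixMu, List.prod_take_succ _ _ (by simp)]
  simp [prefixMu, Walk.dartAt_eq_getElem]

lemma prefixMu_length {u v : V} (w : G.Walk u v) : prefixMu τ w w.length = mu G τ w := by
  rw [prefixMu, mu_eq_prod_dartMu, List.take_of_length_le (by simp)]

lemma prefixMu_append_left {u v x : V} (p : G.Walk u v) (q : G.Walk v x) {k : ℕ}
    (hk : k ≤ p.length) : prefixMu τ (p.append q) k = prefixMu τ p k := by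
  rw [prefixMu, prefixMu, Walk.darts_append, List.map_append,
    List.take_append_of_le_length (by simpa using hk)]

lemma prefixMu_append_right {u v x : V} (p : G.Walk u v) (q : G.Walk v x) (k : ℕ) :
    prefixMu τ (p.append q) (p.length + k) = mu G τ p * prefixMu τ q k := by
  have hlen : p.length = (p.darts.map (dartMu τ)).length := by simp
  rw [prefixMu, prefixMu, mu_eq_prod_dartMu, Walk.darts_append, List.map_append, hlen,
    List.take_length_add_append, List.prod_append]

def sectionParity {u v : V} (w : G.Walk u v) (i : Fin w.length) : ℤˣ :=
  τ (dartAt w i).edge (dartAt w i).fst * prefixMu τ w i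

lemma prefixMu_csucc {v : V} {w : G.Walk v v} (hw : mu G τ w = 1) (i : Fin w.length) :
    prefixMu τ w (csucc i) = prefixMu τ w i * dartMu τ (dartAt w i) := by
  rw [← prefixMu_succ, csucc]
  rcases (show (i : ℕ) + 1 ≤ w.length from i.isLt).eq_or_lt with h | h
  · simp only [h, Nat.mod_self, prefixMu_length, hw]
    rfl
  · simp [Nat.mod_eq_of_lt h]

lemma flipRel_sectionParity {v : V} {w : G.Walk v v} (hw : mu G τ w = 1) :
    FlipRel G τ w (sectionParity τ w) := by
  intro i
  rw [sectionParity, sectionParity, prefixMu_csucc τ hw, Walk.dartAt_csucc_fst, dartMu]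
  simp only [neg_mul, mul_neg, neg_inj]
  ac_rfl

lemma sectionParity_append_left {u v x : V} (p : G.Walk u v) (q : G.Walk v x)
    (i : Fin p.length) :
    sectionParity τ (p.append q) ⟨i, by simp; omega⟩ = sectionParity τ p i := by
  rw [sectionParity, sectionParity, Walk.dartAt_append_left,
    prefixMu_append_left τ p q i.isLt.le]

lemma sectionParity_append_right {u v x : V} {p : G.Walk u v} (hp : mu G τ p = 1)
    (q : G.Walk v x) (j : Fin q.length) :
    sectionParity τ (p.append q) ⟨p.length + j, by simp⟩ = sectionParity τ q j := by
  rw [sectionParity, sectionParity, Walk.dartAt_append_right, prefixMu_append_right, hp,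
    one_mul]

lemma prod_sectionParity_append {M : Type*} [CommMonoid M] {u v x : V} {p : G.Walk u v}
    (hp : mu G τ p = 1) (q : G.Walk v x) (g : G.Dart → ℤˣ → M) :
    ∏ i, g (dartAt (p.append q) i) (sectionParity τ (p.append q) i) =
      (∏ i, g (dartAt p i) (sectionParity τ p i)) *
        ∏ j, g (dartAt q j) (sectionParity τ q j) := by
  simp only [Walk.prod_fin_length_append p q, Walk.dartAt_append_left,
    sectionParity_append_left, Walk.dartAt_append_right, sectionParity_append_right τ hp]

end SectionParity

section Binomial

variable (K : Type*) [Field K] {G : SimpleGraph V} (τ : Sym2 V → V → ℤˣ)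

lemma Bpos_sectionParity_append {v : V} {p : G.Walk v v} (hp : mu G τ p = 1)
    (q : G.Walk v v) :
    Bpos K (p.append q) (sectionParity τ (p.append q)) =
      Bpos K p (sectionParity τ p) * Bpos K q (sectionParity τ q) := by
  simp only [Bpos, Finset.prod_filter]
  exact prod_sectionParity_append τ hp q fun (d : G.Dart) (s : ℤˣ) =>
    if s = 1 then (MvPolynomial.X ⟨d.edge, d.edge_mem⟩ : MvPolynomial G.edgeSet K) else 1

lemma Bneg_sectionParity_append {v : V} {p : G.Walk v v} (hp : mu G τ p = 1)
    (q : G.Walk v v) :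
    Bneg K (p.append q) (sectionParity τ (p.append q)) =
      Bneg K p (sectionParity τ p) * Bneg K q (sectionParity τ q) := by
  simp only [Bneg, Finset.prod_filter]
  exact prod_sectionParity_append τ hp q fun (d : G.Dart) (s : ℤˣ) =>
    if s = -1 then (MvPolynomial.X ⟨d.edge, d.edge_mem⟩ : MvPolynomial G.edgeSet K) else 1

end Binomial

theorem binomial_append_general (K : Type*) [Field K]
    (G : SimpleGraph V) (τ : Sym2 V → V → ℤˣ) (v : V)
    (w w' : G.Walk v v) (hw : mu G τ w = 1) (hw' : mu G τ w' = 1) :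
    ∃ (κ : Fin w.length → ℤˣ) (κ' : Fin w'.length → ℤˣ)
      (κ'' : Fin (w.append w').length → ℤˣ),
      FlipRel G τ w κ ∧ FlipRel G τ w' κ' ∧ FlipRel G τ (w.append w') κ'' ∧
      Bpos K (w.append w') κ'' = Bpos K w κ * Bpos K w' κ' ∧
      Bneg K (w.append w') κ'' = Bneg K w κ * Bneg K w' κ' :=
  ⟨sectionParity τ w, sectionParity τ w', sectionParity τ (w.append w'),
    flipRel_sectionParity τ hw, flipRel_sectionParity τ hw',
    flipRel_sectionParity τ (by rw [mu_append, hw, hw', one_mul]),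
    Bpos_sectionParity_append K τ hw w', Bneg_sectionParity_append K τ hw w'⟩

/-- For two even closed walks w and w' with the same first vertex,
choosing the associated binomials appropriately (each is defined only up to sign,
i.e. up to the choice of section-parity assignment κ), the binomial of the
concatenation satisfies B⁺_{w+w'} = B⁺_w·B⁺_{w'} and B⁻_{w+w'} = B⁻_w·B⁻_{w'}. -/
theorem binomial_append [DecidableEq V] (K : Type*) [Field K]
    (G : SimpleGraph V) [Fintype G.edgeSet] (τ : Sym2 V → V → ℤˣ) (v : V)
    (w w' : G.Walk v v) (hw : mu G τ w = 1) (hw' : mu G τ w' = 1) :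
    ∃ (κ : Fin w.length → ℤˣ) (κ' : Fin w'.length → ℤˣ)
      (κ'' : Fin (w.append w').length → ℤˣ),
      FlipRel G τ w κ ∧ FlipRel G τ w' κ' ∧ FlipRel G τ (w.append w') κ'' ∧
      Bpos K (w.append w') κ'' = Bpos K w κ * Bpos K w' κ' ∧
      Bneg K (w.append w') κ'' = Bneg K w κ * Bneg K w' κ' :=
  binomial_append_general K G τ v w w' hw hw'
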